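/- For Δ = 3 and Π the sinkless-and-sourceless-orientation problem (labels {B,C}, node constraint all 3-multisets containing at least one B and at least one C, edge constraint {B,C}), the problem Q(Π) = R̄(R(Π)) is, up to renaming of labels, the problem with labels {B,C,D}, node constraint the single configuration {B,C,D}, and edge constraint {{B,C},{B,D},{C,D},{D,D}}. -/
import Mathlib


set_option autoImplicit false

/-- A node-edge-checkable problem with (node) degree `Δ`: a set of node
configurations (cardinality-`Δ` multisets of labels) and a set of edge
configurations (cardinality-`2` multisets of labels). -/
structure NEProblem (Δ : ℕ) (Λ : Type) where
  nodeC : Set (Multiset Λ)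
  edgeC : Set (Multiset Λ)
  node_card : ∀ m ∈ nodeC, Multiset.card m = Δ
  edge_card : ∀ m ∈ edgeC, Multiset.card m = 2

/-- Nonempty subsets of `Λ`: the labels of `R*(P)`, `R(P)`, `R̄(P)`. -/
abbrev SubS (Λ : Type) : Type := {S : Set Λ // S.Nonempty}

variable {Δ : ℕ} {Λ Λ' Λ'' ΛP ΛI ΛF : Type}

/-- `f` is a port-local relaxation function from `P` to `P'`. -/
def IsPortLocalRelax (P : NEProblem Δ Λ) (P' : NEProblem Δ Λ') (f : Λ → Λ') : Prop :=
  (∀ m ∈ P.nodeC, m.map f ∈ P'.nodeC) ∧ (∀ m ∈ P.edgeC, m.map f ∈ P'.edgeC)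

/-- An occurrence-based relaxation witness from `P` to `P'`: for each node
configuration `C` of `P`, `p C` is a multiset of pairs matching each occurrence
of a label in `C` with its image label, such that node configurations are mapped
into node configurations of `P'`, and any two occurrences forming an edge
configuration of `P` are mapped to an edge configuration of `P'`. -/
def IsRelaxWitness (P : NEProblem Δ Λ) (P' : NEProblem Δ Λ')
    (p : Multiset Λ → Multiset (Λ × Λ')) : Prop :=
  (∀ C ∈ P.nodeC, (p C).map Prod.fst = C) ∧
  (∀ C ∈ P.nodeC, (p C).map Prod.snd ∈ P'.nodeC) ∧
  (∀ C ∈ P.nodeC, ∀ C' ∈ P.nodeC, ∀ q ∈ p C, ∀ q' ∈ p C',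
    ({q.1, q'.1} : Multiset Λ) ∈ P.edgeC → ({q.2, q'.2} : Multiset Λ') ∈ P'.edgeC)

/-- `P →0 P'` : `P'` is a relaxation of `P` (occurrence-based sense). -/
def Relaxes (P : NEProblem Δ Λ) (P' : NEProblem Δ Λ') : Prop :=
  ∃ p, IsRelaxWitness P P' p

/-- An edge-based relaxation witness from `P` to `P'` (dual of `IsRelaxWitness`). -/
def IsEdgeRelaxWitness (P : NEProblem Δ Λ) (P' : NEProblem Δ Λ')
    (p : Multiset Λ → Multiset (Λ × Λ')) : Prop :=
  (∀ C ∈ P.edgeC, (p C).map Prod.fst = C) ∧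
  (∀ C ∈ P.edgeC, (p C).map Prod.snd ∈ P'.edgeC) ∧
  (∀ s : Multiset (Λ × Λ'), (∀ q ∈ s, ∃ C ∈ P.edgeC, q ∈ p C) →
    s.map Prod.fst ∈ P.nodeC → s.map Prod.snd ∈ P'.nodeC)

/-- `P'` is an edge-based relaxation of `P`. -/
def EdgeRelaxes (P : NEProblem Δ Λ) (P' : NEProblem Δ Λ') : Prop :=
  ∃ p, IsEdgeRelaxWitness P P' p

/-- The problem `R*(P)`: labels are nonempty subsets of the labels of `P`;
a node configuration is any `Δ`-multiset of sets admitting a selection forming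
a node configuration of `P`; an edge configuration is any pair of sets all of
whose selections form edge configurations of `P`. -/
def RStar (P : NEProblem Δ Λ) : NEProblem Δ (SubS Λ) where
  nodeC := {m | Multiset.card m = Δ ∧ ∃ p : Multiset (SubS Λ × Λ),
    p.map Prod.fst = m ∧ (∀ q ∈ p, q.2 ∈ q.1.val) ∧ p.map Prod.snd ∈ P.nodeC}
  edgeC := {m | ∃ S₁ S₂ : SubS Λ, m = {S₁, S₂} ∧
    ∀ L₁ ∈ S₁.val, ∀ L₂ ∈ S₂.val, ({L₁, L₂} : Multiset Λ) ∈ P.edgeC}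
  node_card := fun _ hm => hm.1
  edge_card := by rintro m ⟨S₁, S₂, rfl, -⟩; rfl

/-- The product `P × P'` of two node-edge-checkable problems. -/
def prodP (P : NEProblem Δ Λ) (P' : NEProblem Δ Λ') : NEProblem Δ (Λ × Λ') where
  nodeC := {m | m.map Prod.fst ∈ P.nodeC ∧ m.map Prod.snd ∈ P'.nodeC}
  edgeC := {m | m.map Prod.fst ∈ P.edgeC ∧ m.map Prod.snd ∈ P'.edgeC}
  node_card := fun m hm => by have := P.node_card _ hm.1; simpa using this
  edge_card := fun m hm => by have := P.edge_card _ hm.1; simpa using this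

/-- The tripotent input `τ_P(Pi)`: labels are functions from the labels of `Pi`
to the labels of `R*(P)`; a multiset of functions is a node (resp. edge)
configuration iff applying it (in any matching) to every node (resp. edge)
configuration of `Pi` yields a node (resp. edge) configuration of `R*(P)`. -/
def tau (P : NEProblem Δ ΛP) (Pi : NEProblem Δ Λ) : NEProblem Δ (Λ → SubS ΛP) where
  nodeC := {m | Multiset.card m = Δ ∧ ∀ C ∈ Pi.nodeC,
    ∀ p : Multiset ((Λ → SubS ΛP) × Λ), p.map Prod.fst = m → p.map Prod.snd = C →
      p.map (fun q => q.1 q.2) ∈ (RStar P).nodeC}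
  edgeC := {m | Multiset.card m = 2 ∧ ∀ C ∈ Pi.edgeC,
    ∀ p : Multiset ((Λ → SubS ΛP) × Λ), p.map Prod.fst = m → p.map Prod.snd = C →
      p.map (fun q => q.1 q.2) ∈ (RStar P).edgeC}
  node_card := fun _ hm => hm.1
  edge_card := fun _ hm => hm.1

/-- A pair `{S₁, S₂}` of nonempty sets of labels satisfies the universal
quantifier w.r.t. the edge constraint of `P`. -/
def univEdge (P : NEProblem Δ Λ) (m : Multiset (SubS Λ)) : Prop :=
  ∃ S₁ S₂ : SubS Λ, m = {S₁, S₂} ∧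
    ∀ L₁ ∈ S₁.val, ∀ L₂ ∈ S₂.val, ({L₁, L₂} : Multiset Λ) ∈ P.edgeC

/-- A `Δ`-multiset of nonempty sets of labels satisfies the universal quantifier
w.r.t. the node constraint of `P`. -/
def univNode (P : NEProblem Δ Λ) (m : Multiset (SubS Λ)) : Prop :=
  Multiset.card m = Δ ∧ ∀ p : Multiset (SubS Λ × Λ),
    p.map Prod.fst = m → (∀ q ∈ p, q.2 ∈ q.1.val) → p.map Prod.snd ∈ P.nodeC

/-- `m'` strictly dominates `m` (coordinatewise inclusion up to permutation,
strict in at least one coordinate). -/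
def strictlyDominates (m' m : Multiset (SubS Λ)) : Prop :=
  ∃ p : Multiset (SubS Λ × SubS Λ), p.map Prod.fst = m' ∧ p.map Prod.snd = m ∧
    (∀ q ∈ p, q.2.val ⊆ q.1.val) ∧ ∃ q ∈ p, q.2.val ⊂ q.1.val

/-- The edge constraint of `R(P)`: maximal universally-satisfying pairs. -/
def REedge (P : NEProblem Δ Λ) : Set (Multiset (SubS Λ)) :=
  {m | univEdge P m ∧ ∀ m', univEdge P m' → ¬ strictlyDominates m' m}

/-- The problem `R(P)`. -/
def RE (P : NEProblem Δ Λ) : NEProblem Δ (SubS Λ) where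
  nodeC := {m | Multiset.card m = Δ ∧ (∀ S ∈ m, ∃ e ∈ REedge P, S ∈ e) ∧
    ∃ p : Multiset (SubS Λ × Λ), p.map Prod.fst = m ∧ (∀ q ∈ p, q.2 ∈ q.1.val) ∧
      p.map Prod.snd ∈ P.nodeC}
  edgeC := REedge P
  node_card := fun _ hm => hm.1
  edge_card := by rintro m ⟨⟨S₁, S₂, rfl, -⟩, -⟩; rfl

/-- The node constraint of `R̄(P)`: maximal universally-satisfying `Δ`-multisets. -/
def REbarNode (P : NEProblem Δ Λ) : Set (Multiset (SubS Λ)) :=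
  {m | univNode P m ∧ ∀ m', univNode P m' → ¬ strictlyDominates m' m}

/-- The problem `R̄(P)` (dual of `R(P)`). -/
def REbar (P : NEProblem Δ Λ) : NEProblem Δ (SubS Λ) where
  nodeC := REbarNode P
  edgeC := {m | ∃ S₁ S₂ : SubS Λ, m = {S₁, S₂} ∧
    (∃ e ∈ REbarNode P, S₁ ∈ e) ∧ (∃ e ∈ REbarNode P, S₂ ∈ e) ∧
    ∃ L₁ ∈ S₁.val, ∃ L₂ ∈ S₂.val, ({L₁, L₂} : Multiset Λ) ∈ P.edgeC}
  node_card := fun _ hm => hm.1.1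
  edge_card := by rintro m ⟨S₁, S₂, rfl, -⟩; rfl

/-- One step of round elimination: `Q = R̄ ∘ R`. -/
def Qop (P : NEProblem Δ Λ) : NEProblem Δ (SubS (SubS Λ)) := REbar (RE P)

/-- Label type of `Q^i(P)`. -/
def QIterType (Λ : Type) : ℕ → Type
  | 0 => Λ
  | i + 1 => SubS (SubS (QIterType Λ i))

/-- `Q^i(P)`. -/
def QIter (P : NEProblem Δ Λ) : (i : ℕ) → NEProblem Δ (QIterType Λ i)
  | 0 => P
  | i + 1 => Qop (QIter P i)

/-- Labels of `P` occurring in some configuration of `P`. -/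
def usedLabels (P : NEProblem Δ Λ) : Set Λ :=
  {L | (∃ C ∈ P.nodeC, L ∈ C) ∨ (∃ C ∈ P.edgeC, L ∈ C)}

/-- `P'` arises from `P` by a bijective renaming of (used) labels. -/
def EquivUpToRenaming (P : NEProblem Δ Λ) (P' : NEProblem Δ Λ') : Prop :=
  ∃ f : Λ → Λ', Set.InjOn f (usedLabels P) ∧
    P'.nodeC = (fun m => m.map f) '' P.nodeC ∧
    P'.edgeC = (fun m => m.map f) '' P.edgeC

/-- The trivial one-label problem. -/
def trivProblem (Δ : ℕ) : NEProblem Δ Unit where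
  nodeC := {Multiset.replicate Δ ()}
  edgeC := {Multiset.replicate 2 ()}
  node_card := by intro m hm; rw [Set.mem_singleton_iff] at hm; subst hm; simp
  edge_card := by intro m hm; rw [Set.mem_singleton_iff] at hm; subst hm; simp

/-- Labels of the sinkless-and-sourceless orientation problem. -/
inductive SSOLabel : Type
  | B | C
deriving DecidableEq

/-- The sinkless-and-sourceless orientation problem (Δ = 3): node constraint is
all 3-multisets containing at least one `B` and at least one `C`; edge
constraint is `{B, C}`. -/
def SSO : NEProblem 3 SSOLabel where
  nodeC := {m | Multiset.card m = 3 ∧ SSOLabel.B ∈ m ∧ SSOLabel.C ∈ m}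
  edgeC := {({SSOLabel.B, SSOLabel.C} : Multiset SSOLabel)}
  node_card := fun _ h => h.1
  edge_card := by intro m hm; rw [Set.mem_singleton_iff] at hm; subst hm; rfl

/-- Labels of the explicit description of `Q(SSO)`. -/
inductive T3 : Type
  | B | C | D
deriving DecidableEq

/-- The explicit problem: labels `{B, C, D}`, node constraint `{B, C, D}`,
edge constraint `{B,C}, {B,D}, {C,D}, {D,D}`. -/
def QSSOtarget : NEProblem 3 T3 where
  nodeC := {({T3.B, T3.C, T3.D} : Multiset T3)}
  edgeC := {m | m = ({T3.B, T3.C} : Multiset T3) ∨ m = {T3.B, T3.D} ∨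
    m = {T3.C, T3.D} ∨ m = {T3.D, T3.D}}
  node_card := by intro m hm; rw [Set.mem_singleton_iff] at hm; subst hm; rfl
  edge_card := by rintro m (rfl | rfl | rfl | rfl) <;> rfl

/-! ### Auxiliary development -/

open Multiset

noncomputable section
open Classical

instance : Fintype SSOLabel :=
  ⟨{SSOLabel.B, SSOLabel.C}, fun x => by cases x <;> simp⟩

lemma mpair_eq {α : Type*} {a b c d : α} :
    ({a, b} : Multiset α) = {c, d} ↔ (a = c ∧ b = d) ∨ (a = d ∧ b = c) := by
  constructor
  · intro h
    rcases Multiset.cons_eq_cons.mp h with ⟨rfl, h2⟩ | ⟨hne, cs, h1, h2⟩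
    · left; exact ⟨rfl, by simpa using h2⟩
    · have hcs : cs = 0 := by
        have := congrArg Multiset.card h1
        simpa using this
      subst hcs
      right
      constructor
      · have : a ∈ ({d} : Multiset α) := by rw [h2]; simp
        simpa using this
      · have hb : ({b} : Multiset α) = {c} := by simpa using h1
        have : b ∈ ({c} : Multiset α) := by rw [← hb]; simp
        simpa using this
  · rintro (⟨rfl, rfl⟩ | ⟨rfl, rfl⟩)
    · rfl
    · exact Multiset.pair_comm a b

lemma no_self_dom {Λ : Type} [Finite Λ] (m : Multiset (SubS Λ)) :
    ¬ strictlyDominates m m := by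
  rintro ⟨p, hf, hs, hsub, q, hq, hstrict⟩
  have hlt : (p.map (fun q => q.2.val.ncard)).sum < (p.map (fun q => q.1.val.ncard)).sum := by
    refine Multiset.sum_lt_sum ?_ ⟨q, hq, ?_⟩
    · intro i hi
      exact Set.ncard_le_ncard (hsub i hi) (Set.toFinite _)
    · exact Set.ncard_lt_ncard hstrict (Set.toFinite _)
  have h1 : p.map (fun q => q.1.val.ncard) = m.map (fun S => S.val.ncard) := by
    rw [← hf, Multiset.map_map]; rfl
  have h2 : p.map (fun q => q.2.val.ncard) = m.map (fun S => S.val.ncard) := by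
    rw [← hs, Multiset.map_map]; rfl
  rw [h1, h2] at hlt
  exact lt_irrefl _ hlt

/-- The label `{B}` of `R*(SSO)`. -/
def lB : SubS SSOLabel := ⟨{SSOLabel.B}, Set.singleton_nonempty _⟩
/-- The label `{C}` of `R*(SSO)`. -/
def lC : SubS SSOLabel := ⟨{SSOLabel.C}, Set.singleton_nonempty _⟩

lemma B_ne_C : SSOLabel.B ≠ SSOLabel.C := by intro h; cases h

lemma lB_ne_lC : lB ≠ lC := by
  intro h
  have : SSOLabel.B ∈ (lC.val : Set SSOLabel) := by rw [← h]; simp [lB]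
  simp only [lC, Set.mem_singleton_iff] at this
  exact B_ne_C this

/-- The labels β, γ, δ of `Q(SSO)`. -/
def Lβ : SubS (SubS SSOLabel) := ⟨{lB}, Set.singleton_nonempty _⟩
def Lγ : SubS (SubS SSOLabel) := ⟨{lC}, Set.singleton_nonempty _⟩
def Lδ : SubS (SubS SSOLabel) := ⟨{lB, lC}, ⟨lB, by simp⟩⟩

lemma Lβ_ne_Lγ : Lβ ≠ Lγ := by
  intro h
  have : lB ∈ (Lγ.val : Set (SubS SSOLabel)) := by rw [← h]; simp [Lβ]
  simp only [Lγ, Set.mem_singleton_iff] at this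
  exact lB_ne_lC this

lemma Lβ_ne_Lδ : Lβ ≠ Lδ := by
  intro h
  have : lC ∈ (Lβ.val : Set (SubS SSOLabel)) := by rw [h]; simp [Lδ]
  simp only [Lβ, Set.mem_singleton_iff] at this
  exact lB_ne_lC this.symm

lemma Lγ_ne_Lδ : Lγ ≠ Lδ := by
  intro h
  have : lB ∈ (Lγ.val : Set (SubS SSOLabel)) := by rw [h]; simp [Lδ]
  simp only [Lγ, Set.mem_singleton_iff] at this
  exact lB_ne_lC this

lemma univEdge_SSO_iff (m : Multiset (SubS SSOLabel)) :
    univEdge SSO m ↔ m = ({lB, lC} : Multiset (SubS SSOLabel)) := by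
  constructor
  · rintro ⟨S₁, S₂, rfl, hall⟩
    have hSSO : ∀ L₁ ∈ S₁.val, ∀ L₂ ∈ S₂.val,
        ({L₁, L₂} : Multiset SSOLabel) = {SSOLabel.B, SSOLabel.C} := by
      intro L₁ h₁ L₂ h₂
      have := hall L₁ h₁ L₂ h₂
      simpa [SSO] using this
    obtain ⟨x₁, hx₁⟩ := S₁.2
    obtain ⟨x₂, hx₂⟩ := S₂.2
    rcases mpair_eq.mp (hSSO x₁ hx₁ x₂ hx₂) with ⟨hb, hc⟩ | ⟨hc, hb⟩
    · -- x₁ = B, x₂ = C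
      have h1 : S₁.val = {SSOLabel.B} := by
        apply Set.eq_singleton_iff_nonempty_unique_mem.mpr
        refine ⟨S₁.2, fun y hy => ?_⟩
        rcases mpair_eq.mp (hSSO y hy x₂ hx₂) with ⟨h, _⟩ | ⟨h, h'⟩
        · exact h
        · exact absurd (hc.symm.trans h') B_ne_C.symm
      have h2 : S₂.val = {SSOLabel.C} := by
        apply Set.eq_singleton_iff_nonempty_unique_mem.mpr
        refine ⟨S₂.2, fun y hy => ?_⟩
        rcases mpair_eq.mp (hSSO x₁ hx₁ y hy) with ⟨_, h⟩ | ⟨h, h'⟩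
        · exact h
        · exact absurd (hb.symm.trans h) B_ne_C
      have : S₁ = lB := Subtype.ext h1
      have : S₂ = lC := Subtype.ext h2
      simp_all
    · -- x₁ = C, x₂ = B
      have h1 : S₁.val = {SSOLabel.C} := by
        apply Set.eq_singleton_iff_nonempty_unique_mem.mpr
        refine ⟨S₁.2, fun y hy => ?_⟩
        rcases mpair_eq.mp (hSSO y hy x₂ hx₂) with ⟨h, h'⟩ | ⟨h, _⟩
        · exact absurd (hb.symm.trans h') B_ne_C
        · exact h
      have h2 : S₂.val = {SSOLabel.B} := by
        apply Set.eq_singleton_iff_nonempty_unique_mem.mpr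
        refine ⟨S₂.2, fun y hy => ?_⟩
        rcases mpair_eq.mp (hSSO x₁ hx₁ y hy) with ⟨h', h⟩ | ⟨_, h⟩
        · exact absurd (hc.symm.trans h') B_ne_C.symm
        · exact h
      have e1 : S₁ = lC := Subtype.ext h1
      have e2 : S₂ = lB := Subtype.ext h2
      rw [e1, e2]
      exact Multiset.pair_comm lC lB
  · rintro rfl
    refine ⟨lB, lC, rfl, ?_⟩
    intro L₁ h₁ L₂ h₂
    simp only [lB, lC, Set.mem_singleton_iff] at h₁ h₂
    subst h₁; subst h₂
    simp [SSO]

lemma REedge_SSO : REedge SSO = {({lB, lC} : Multiset (SubS SSOLabel))} := by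
  ext m
  simp only [REedge, Set.mem_setOf_eq, Set.mem_singleton_iff]
  constructor
  · rintro ⟨hu, _⟩
    exact (univEdge_SSO_iff m).mp hu
  · rintro rfl
    refine ⟨(univEdge_SSO_iff _).mpr rfl, ?_⟩
    intro m' hu'
    rw [univEdge_SSO_iff] at hu'
    subst hu'
    exact no_self_dom _

lemma mem_REnode_iff (s : Multiset (SubS SSOLabel)) :
    s ∈ (RE SSO).nodeC ↔
      Multiset.card s = 3 ∧ (∀ L ∈ s, L = lB ∨ L = lC) ∧ lB ∈ s ∧ lC ∈ s := by
  simp only [RE, Set.mem_setOf_eq, REedge_SSO]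
  constructor
  · rintro ⟨hc, hmem, p, hf, hsel, hnode⟩
    have hlab : ∀ L ∈ s, L = lB ∨ L = lC := by
      intro L hL
      obtain ⟨e, he, hLe⟩ := hmem L hL
      rw [Set.mem_singleton_iff] at he
      subst he
      simpa using hLe
    refine ⟨hc, hlab, ?_, ?_⟩
    · -- lB ∈ s, since B ∈ p.map snd
      simp only [SSO, Set.mem_setOf_eq] at hnode
      obtain ⟨_, hB, _⟩ := hnode
      obtain ⟨q, hq, hq2⟩ := Multiset.mem_map.mp hB
      have hq1 : q.1 ∈ s := hf ▸ Multiset.mem_map_of_mem _ hq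
      rcases hlab q.1 hq1 with h | h
      · exact h ▸ hq1
      · exfalso
        have := hsel q hq
        rw [h] at this
        simp only [lC, Set.mem_singleton_iff] at this
        exact B_ne_C ((this ▸ hq2).symm)
    · simp only [SSO, Set.mem_setOf_eq] at hnode
      obtain ⟨_, _, hC⟩ := hnode
      obtain ⟨q, hq, hq2⟩ := Multiset.mem_map.mp hC
      have hq1 : q.1 ∈ s := hf ▸ Multiset.mem_map_of_mem _ hq
      rcases hlab q.1 hq1 with h | h
      · exfalso
        have := hsel q hq
        rw [h] at this
        simp only [lB, Set.mem_singleton_iff] at this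
        exact B_ne_C (this ▸ hq2)
      · exact h ▸ hq1
  · rintro ⟨hc, hlab, hB, hC⟩
    refine ⟨hc, ?_, ?_⟩
    · intro L hL
      refine ⟨{lB, lC}, rfl, ?_⟩
      rcases hlab L hL with h | h <;> subst h <;> simp
    · refine ⟨s.map (fun L => (L, if L = lB then SSOLabel.B else SSOLabel.C)), ?_, ?_, ?_⟩
      · rw [Multiset.map_map]; simp
      · intro q hq
        obtain ⟨L, hL, rfl⟩ := Multiset.mem_map.mp hq
        rcases hlab L hL with h | h <;> subst h
        · simp [lB]
        · show (if lC = lB then SSOLabel.B else SSOLabel.C) ∈ lC.val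
          rw [if_neg (fun h => lB_ne_lC h.symm)]
          simp [lC]
      · simp only [SSO, Set.mem_setOf_eq, Multiset.map_map]
        refine ⟨by simpa using hc, ?_, ?_⟩
        · refine Multiset.mem_map.mpr ⟨lB, hB, ?_⟩
          simp
        · refine Multiset.mem_map.mpr ⟨lC, hC, ?_⟩
          exact if_neg (fun h => lB_ne_lC h.symm)

/-- choice-based selection from a multiset of nonempty sets -/
lemma exists_selection {Λ : Type} (m : Multiset (SubS Λ)) :
    ∃ p : Multiset (SubS Λ × Λ), p.map Prod.fst = m ∧ ∀ q ∈ p, q.2 ∈ q.1.val :=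
  ⟨m.map (fun S => (S, S.2.some)), by rw [Multiset.map_map]; simp,
    fun q hq => by
      obtain ⟨S, _, rfl⟩ := Multiset.mem_map.mp hq
      exact S.2.some_mem⟩

lemma univNode_RE_iff (m : Multiset (SubS (SubS SSOLabel))) :
    univNode (RE SSO) m ↔
      Multiset.card m = 3 ∧ (∀ S ∈ m, S.val ⊆ ({lB, lC} : Set (SubS SSOLabel))) ∧
        Lβ ∈ m ∧ Lγ ∈ m := by
  constructor
  · rintro ⟨hc, hall⟩
    have hΔ : Multiset.card m = 3 := hc
    have hsub : ∀ S ∈ m, S.val ⊆ ({lB, lC} : Set (SubS SSOLabel)) := by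
      intro S hS x hx
      by_contra hxn
      obtain ⟨m', hm'⟩ := Multiset.exists_cons_of_mem hS
      obtain ⟨p₀, hp₀f, hp₀sel⟩ := exists_selection m'
      have key := hall ((S, x) ::ₘ p₀)
        (by rw [Multiset.map_cons, hp₀f, hm'])
        (by
          intro q hq
          rcases Multiset.mem_cons.mp hq with rfl | hq
          · exact hx
          · exact hp₀sel q hq)
      rw [mem_REnode_iff] at key
      have hxmem : x ∈ ((S, x) ::ₘ p₀).map Prod.snd := by simp
      rcases key.2.1 x hxmem with h | h <;> simp [h] at hxn
    have hβ : Lβ ∈ m := by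
      by_contra hβn
      have hcmem : ∀ T ∈ m, lC ∈ T.val := by
        intro T hT
        by_contra hcn
        have hTB : T.val = {lB} := by
          apply Set.eq_singleton_iff_nonempty_unique_mem.mpr
          refine ⟨T.2, fun y hy => ?_⟩
          rcases hsub T hT hy with h | h
          · exact h
          · exact absurd (h ▸ hy) hcn
        exact hβn ((Subtype.ext hTB : T = Lβ) ▸ hT)
      have key := hall (m.map (fun T => (T, lC)))
        (by rw [Multiset.map_map]; simp)
        (by
          intro q hq
          obtain ⟨T, hT, rfl⟩ := Multiset.mem_map.mp hq
          exact hcmem T hT)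
      rw [mem_REnode_iff] at key
      obtain ⟨T, _, hTl⟩ := Multiset.mem_map.mp (by
        have := key.2.2.1
        rw [Multiset.map_map] at this
        exact this)
      exact lB_ne_lC (by simpa using hTl.symm)
    have hγ : Lγ ∈ m := by
      by_contra hγn
      have hbmem : ∀ T ∈ m, lB ∈ T.val := by
        intro T hT
        by_contra hbn
        have hTC : T.val = {lC} := by
          apply Set.eq_singleton_iff_nonempty_unique_mem.mpr
          refine ⟨T.2, fun y hy => ?_⟩
          rcases hsub T hT hy with h | h
          · exact absurd (h ▸ hy) hbn
          · exact h
        exact hγn ((Subtype.ext hTC : T = Lγ) ▸ hT)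
      have key := hall (m.map (fun T => (T, lB)))
        (by rw [Multiset.map_map]; simp)
        (by
          intro q hq
          obtain ⟨T, hT, rfl⟩ := Multiset.mem_map.mp hq
          exact hbmem T hT)
      rw [mem_REnode_iff] at key
      obtain ⟨T, _, hTl⟩ := Multiset.mem_map.mp (by
        have := key.2.2.2
        rw [Multiset.map_map] at this
        exact this)
      exact lB_ne_lC (by simpa using hTl)
    exact ⟨hΔ, hsub, hβ, hγ⟩
  · rintro ⟨hc, hsub, hβ, hγ⟩
    refine ⟨hc, ?_⟩
    intro p hf hsel
    rw [mem_REnode_iff]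
    refine ⟨by rw [Multiset.card_map, ← Multiset.card_map Prod.fst p, hf, hc], ?_, ?_, ?_⟩
    · intro L hL
      obtain ⟨q, hq, rfl⟩ := Multiset.mem_map.mp hL
      have hq1 : q.1 ∈ m := hf ▸ Multiset.mem_map_of_mem _ hq
      have := hsub q.1 hq1 (hsel q hq)
      simpa using this
    · obtain ⟨q, hq, hq1⟩ := Multiset.mem_map.mp (hf ▸ hβ : Lβ ∈ p.map Prod.fst)
      have := hsel q hq
      rw [hq1] at this
      simp only [Lβ, Set.mem_singleton_iff] at this
      exact Multiset.mem_map.mpr ⟨q, hq, this⟩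
    · obtain ⟨q, hq, hq1⟩ := Multiset.mem_map.mp (hf ▸ hγ : Lγ ∈ p.map Prod.fst)
      have := hsel q hq
      rw [hq1] at this
      simp only [Lγ, Set.mem_singleton_iff] at this
      exact Multiset.mem_map.mpr ⟨q, hq, this⟩

lemma univNode_decomp {m : Multiset (SubS (SubS SSOLabel))}
    (h : univNode (RE SSO) m) :
    ∃ X : SubS (SubS SSOLabel), m = {Lβ, Lγ, X} ∧
      X.val ⊆ ({lB, lC} : Set (SubS SSOLabel)) := by
  rw [univNode_RE_iff] at h
  obtain ⟨hc, hsub, hβ, hγ⟩ := h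
  obtain ⟨m₁, rfl⟩ := Multiset.exists_cons_of_mem hβ
  have hγ₁ : Lγ ∈ m₁ := by
    rcases Multiset.mem_cons.mp hγ with h | h
    · exact absurd h.symm Lβ_ne_Lγ
    · exact h
  obtain ⟨m₂, rfl⟩ := Multiset.exists_cons_of_mem hγ₁
  have hcard : Multiset.card m₂ = 1 := by simpa using hc
  obtain ⟨X, rfl⟩ := Multiset.card_eq_one.mp hcard
  exact ⟨X, rfl, hsub X (by simp)⟩

lemma univNode_βγδ : univNode (RE SSO) ({Lβ, Lγ, Lδ} : Multiset (SubS (SubS SSOLabel))) := by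
  rw [univNode_RE_iff]
  refine ⟨rfl, ?_, by simp, by simp⟩
  intro S hS
  simp only [Multiset.insert_eq_cons, Multiset.mem_cons, Multiset.mem_singleton] at hS
  rcases hS with rfl | rfl | rfl
  · simp only [Lβ]; exact Set.singleton_subset_iff.mpr (by simp)
  · simp only [Lγ]; exact Set.singleton_subset_iff.mpr (by simp)
  · simp only [Lδ]; exact subset_rfl

lemma ncard_Lβ : Lβ.val.ncard = 1 := Set.ncard_singleton _
lemma ncard_Lγ : Lγ.val.ncard = 1 := Set.ncard_singleton _
lemma ncard_Lδ : Lδ.val.ncard = 2 := Set.ncard_pair lB_ne_lC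

lemma REbarNode_SSO :
    REbarNode (RE SSO) = {({Lβ, Lγ, Lδ} : Multiset (SubS (SubS SSOLabel)))} := by
  ext m
  simp only [REbarNode, Set.mem_setOf_eq, Set.mem_singleton_iff]
  constructor
  · rintro ⟨hu, hmax⟩
    obtain ⟨X, rfl, hXsub⟩ := univNode_decomp hu
    by_cases hX : X = Lδ
    · rw [hX]
    · exfalso
      refine hmax {Lβ, Lγ, Lδ} univNode_βγδ ?_
      refine ⟨{(Lβ, Lβ), (Lγ, Lγ), (Lδ, X)}, by simp, by simp, ?_, ?_⟩
      · intro q hq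
        simp only [Multiset.insert_eq_cons, Multiset.mem_cons, Multiset.mem_singleton] at hq
        rcases hq with rfl | rfl | rfl
        · exact subset_rfl
        · exact subset_rfl
        · exact hXsub
      · refine ⟨(Lδ, X), by simp, ?_⟩
        refine Set.ssubset_iff_subset_ne.mpr ⟨hXsub, ?_⟩
        intro h
        exact hX (Subtype.ext h)
  · rintro rfl
    refine ⟨univNode_βγδ, ?_⟩
    rintro m' hu' ⟨p, hf, hs, hsub, q, hq, hstrict⟩
    obtain ⟨X', rfl, hX'sub⟩ := univNode_decomp hu'
    have hlt : (p.map (fun q => q.2.val.ncard)).sum < (p.map (fun q => q.1.val.ncard)).sum := by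
      refine Multiset.sum_lt_sum ?_ ⟨q, hq, ?_⟩
      · intro i hi
        exact Set.ncard_le_ncard (hsub i hi) (Set.toFinite _)
      · exact Set.ncard_lt_ncard hstrict (Set.toFinite _)
    have h1 : p.map (fun q => q.1.val.ncard) =
        ({Lβ, Lγ, X'} : Multiset _).map (fun S => S.val.ncard) := by
      rw [← hf, Multiset.map_map]; rfl
    have h2 : p.map (fun q => q.2.val.ncard) =
        ({Lβ, Lγ, Lδ} : Multiset _).map (fun S => S.val.ncard) := by
      rw [← hs, Multiset.map_map]; rfl
    rw [h1, h2] at hlt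
    have hXle : X'.val.ncard ≤ 2 := by
      calc X'.val.ncard ≤ ({lB, lC} : Set (SubS SSOLabel)).ncard :=
            Set.ncard_le_ncard hX'sub (Set.toFinite _)
        _ = 2 := Set.ncard_pair lB_ne_lC
    simp only [Multiset.insert_eq_cons, Multiset.map_cons, Multiset.map_singleton,
      Multiset.sum_cons, Multiset.sum_singleton, ncard_Lβ, ncard_Lγ, ncard_Lδ] at hlt
    omega

lemma Qop_nodeC : (Qop SSO).nodeC = {({Lβ, Lγ, Lδ} : Multiset (SubS (SubS SSOLabel)))} :=
  REbarNode_SSO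

lemma mem_βγδ_iff {S : SubS (SubS SSOLabel)} :
    (∃ e ∈ REbarNode (RE SSO), S ∈ e) ↔ S = Lβ ∨ S = Lγ ∨ S = Lδ := by
  rw [REbarNode_SSO]
  constructor
  · rintro ⟨e, he, hSe⟩
    rw [Set.mem_singleton_iff] at he
    subst he
    simpa using hSe
  · rintro (rfl | rfl | rfl) <;> exact ⟨_, rfl, by simp⟩

lemma Qop_edgeC (m : Multiset (SubS (SubS SSOLabel))) :
    m ∈ (Qop SSO).edgeC ↔
      m = {Lβ, Lγ} ∨ m = {Lβ, Lδ} ∨ m = {Lγ, Lδ} ∨ m = {Lδ, Lδ} := by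
  show m ∈ (REbar (RE SSO)).edgeC ↔ _
  simp only [REbar, Set.mem_setOf_eq]
  constructor
  · rintro ⟨S₁, S₂, rfl, h₁, h₂, L₁, hL₁, L₂, hL₂, hedge⟩
    have hedge' : ({L₁, L₂} : Multiset (SubS SSOLabel)) = {lB, lC} := by
      have : (RE SSO).edgeC = REedge SSO := rfl
      rw [this, REedge_SSO] at hedge
      simpa using hedge
    have hLne : ¬ (L₁ = L₂ ∧ L₁ = lB ∧ L₂ = lB) := by
      rintro ⟨_, rfl, rfl⟩
      rcases mpair_eq.mp hedge' with ⟨_, h⟩ | ⟨h, _⟩ <;> exact lB_ne_lC h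
    rcases mem_βγδ_iff.mp h₁ with rfl | rfl | rfl <;>
      rcases mem_βγδ_iff.mp h₂ with rfl | rfl | rfl
    · -- β β : L₁ = L₂ = lB, contradiction
      exfalso
      simp only [Lβ, Set.mem_singleton_iff] at hL₁ hL₂
      subst hL₁; subst hL₂
      rcases mpair_eq.mp hedge' with ⟨_, h⟩ | ⟨h, _⟩ <;> exact lB_ne_lC h
    · exact Or.inl rfl
    · exact Or.inr (Or.inl rfl)
    · exact Or.inl (Multiset.pair_comm _ _)
    · -- γ γ : L₁ = L₂ = lC, contradiction
      exfalso
      simp only [Lγ, Set.mem_singleton_iff] at hL₁ hL₂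
      subst hL₁; subst hL₂
      rcases mpair_eq.mp hedge' with ⟨h, _⟩ | ⟨_, h⟩ <;> exact lB_ne_lC h.symm
    · exact Or.inr (Or.inr (Or.inl rfl))
    · exact Or.inr (Or.inl (Multiset.pair_comm _ _))
    · exact Or.inr (Or.inr (Or.inl (Multiset.pair_comm _ _)))
    · exact Or.inr (Or.inr (Or.inr rfl))
  · have hmem : ∀ S, S = Lβ ∨ S = Lγ ∨ S = Lδ → ∃ e ∈ REbarNode (RE SSO), S ∈ e :=
      fun S h => mem_βγδ_iff.mpr h
    have hedgeBC : ({lB, lC} : Multiset (SubS SSOLabel)) ∈ (RE SSO).edgeC := by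
      show _ ∈ REedge SSO
      rw [REedge_SSO]; rfl
    rintro (rfl | rfl | rfl | rfl)
    · exact ⟨Lβ, Lγ, rfl, hmem _ (Or.inl rfl), hmem _ (Or.inr (Or.inl rfl)),
        lB, by simp [Lβ], lC, by simp [Lγ], hedgeBC⟩
    · exact ⟨Lβ, Lδ, rfl, hmem _ (Or.inl rfl), hmem _ (Or.inr (Or.inr rfl)),
        lB, by simp [Lβ], lC, by simp [Lδ], hedgeBC⟩
    · exact ⟨Lγ, Lδ, rfl, hmem _ (Or.inr (Or.inl rfl)), hmem _ (Or.inr (Or.inr rfl)),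
        lC, by simp [Lγ], lB, by simp [Lδ],
        by rw [Multiset.pair_comm]; exact hedgeBC⟩
    · exact ⟨Lδ, Lδ, rfl, hmem _ (Or.inr (Or.inr rfl)), hmem _ (Or.inr (Or.inr rfl)),
        lB, by simp [Lδ], lC, by simp [Lδ], hedgeBC⟩

/-- the renaming -/
def rn : SubS (SubS SSOLabel) → T3 :=
  fun x => if x = Lβ then T3.B else if x = Lγ then T3.C else T3.D

lemma rn_β : rn Lβ = T3.B := by simp [rn]
lemma rn_γ : rn Lγ = T3.C := by simp [rn, Lβ_ne_Lγ.symm]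
lemma rn_δ : rn Lδ = T3.D := by simp [rn, Lβ_ne_Lδ.symm, Lγ_ne_Lδ.symm]

/-- for Δ = 3, `Q(SSO)` is, up to renaming of labels, the
problem `QSSOtarget`. -/

theorem Q_SSO_characterization : EquivUpToRenaming (Qop SSO) QSSOtarget := by
  refine ⟨rn, ?_, ?_, ?_⟩
  · -- InjOn on used labels
    have hused : usedLabels (Qop SSO) ⊆ {Lβ, Lγ, Lδ} := by
      rintro S (⟨C, hC, hS⟩ | ⟨C, hC, hS⟩)
      · rw [Qop_nodeC, Set.mem_singleton_iff] at hC
        subst hC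
        simpa using hS
      · rw [Qop_edgeC] at hC
        rcases hC with rfl | rfl | rfl | rfl <;> simp_all <;> tauto
    intro x hx y hy hxy
    have hx' := hused hx
    have hy' := hused hy
    simp only [Set.mem_insert_iff, Set.mem_singleton_iff] at hx' hy'
    rcases hx' with rfl | rfl | rfl <;> rcases hy' with rfl | rfl | rfl <;>
      first
      | rfl
      | (exfalso; rw [rn_β, rn_γ] at hxy <;> cases hxy)
      | (exfalso
         simp only [rn_β, rn_γ, rn_δ] at hxy
         cases hxy)
  · -- node constraint
    rw [Qop_nodeC]
    show QSSOtarget.nodeC = (fun m => Multiset.map rn m) '' {({Lβ, Lγ, Lδ} : Multiset _)}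
    rw [Set.image_singleton]
    show ({({T3.B, T3.C, T3.D} : Multiset T3)} : Set (Multiset T3)) = _
    congr 1
    simp [rn_β, rn_γ, rn_δ]
  · -- edge constraint
    ext e
    simp only [Set.mem_image]
    constructor
    · intro he
      have he' : e = ({T3.B, T3.C} : Multiset T3) ∨ e = {T3.B, T3.D} ∨
          e = {T3.C, T3.D} ∨ e = {T3.D, T3.D} := he
      rcases he' with rfl | rfl | rfl | rfl
      · exact ⟨{Lβ, Lγ}, (Qop_edgeC _).mpr (Or.inl rfl), by simp [rn_β, rn_γ]⟩
      · exact ⟨{Lβ, Lδ}, (Qop_edgeC _).mpr (Or.inr (Or.inl rfl)), by simp [rn_β, rn_δ]⟩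
      · exact ⟨{Lγ, Lδ}, (Qop_edgeC _).mpr (Or.inr (Or.inr (Or.inl rfl))), by simp [rn_γ, rn_δ]⟩
      · exact ⟨{Lδ, Lδ}, (Qop_edgeC _).mpr (Or.inr (Or.inr (Or.inr rfl))), by simp [rn_δ]⟩
    · rintro ⟨m, hm, rfl⟩
      rw [Qop_edgeC] at hm
      rcases hm with rfl | rfl | rfl | rfl
      · exact Or.inl (by simp [rn_β, rn_γ])
      · exact Or.inr (Or.inl (by simp [rn_β, rn_δ]))
      · exact Or.inr (Or.inr (Or.inl (by simp [rn_γ, rn_δ])))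
      · exact Or.inr (Or.inr (Or.inr (by simp [rn_δ])))

end
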